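/- Identify ℝ² with ℂ, let H² = {z ∈ ℂ : Im z > 0} and B² = {z ∈ ℂ : |z| < 1}. For a ∈ H² and α ∈ ℝ let f(z) = e^{iα}·(z−a)/(z−\bar{a}), which is a Möbius transformation mapping H² onto B². Then for all x,y ∈ H²: v_{H²}(x,y)/2 ≤ v_{B²}(f(x),f(y)) ≤ 2·v_{H²}(x,y). Both constants are best possible: with f₀(z) = (z−i)/(z+i), for every ε > 0 there exist x,y ∈ H² with v_{B²}(f₀(x),f₀(y)) > (2−ε)·v_{H²}(x,y), and there exist distinct x,y ∈ H² with v_{B²}(f₀(x),f₀(y)) = v_{H²}(x,y)/2. -/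

import Mathlib

open EuclideanGeometry Real Set

/-- The visual angle metric on a planar domain `G ⊊ ℂ`:
`v_G(x,y) = sup_{z ∈ ∂G} ∠(x,z,y)`. -/
noncomputable def visualAngleC (G : Set ℂ) (x y : ℂ) : ℝ :=
  sSup ((fun z => EuclideanGeometry.angle x z y) '' frontier G)

/-- The upper half plane `H² = {z ∈ ℂ : Im z > 0}`. -/
def upperHalfC : Set ℂ := {z | 0 < z.im}

/-- The Möbius transformation `z ↦ e^{iα}(z−a)/(z−\bar a)` mapping `H²` onto the unit disc. -/
noncomputable def halfToDisc (a : ℂ) (α : ℝ) (z : ℂ) : ℂ :=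
  Complex.exp (α * Complex.I) * (z - a) / (z - (starRingEnd ℂ) a)

/-- The Cayley transform `f₀(z) = (z−i)/(z+i)`. -/
noncomputable def cayley (z : ℂ) : ℂ := (z - Complex.I) / (z + Complex.I)

/-!
Write `f = halfToDisc a α` and `b = conj a`. For real `z`,
`f x - f z = K (x - z) (y - b)` and `f y - f z = K (y - z) (x - b)` with the same factor `K`,
so by the triangle inequality for angles the angle at `f z` between `f x` and `f y` differs from
`∠ x z y` by at most `∠ x b y`. The remaining point `exp (α i) = f ∞` of the circle sees `f x`
and `f y` under exactly `∠ x b y`, and `∠ x b y ≤ v_H(x, y)` by the exterior angle theorem at the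
point where the segment from `b` to `x` crosses the real axis. Hence
`v_B ≤ v_H + ∠ x b y ≤ 2 v_H` and `v_H ≤ v_B + ∠ x b y ≤ 2 v_B`.

For sharpness, `x = c (1 + 2i)` and `y = c (2 + i) / 2` have `v_H = arccos (4/5)` for every
`c > 0`, while as `c → ∞` the angle at `f₀ (2c)` tends to `arccos (7/25) = 2 arccos (4/5)`.
Conversely `f₀` sends `∓3/5 + 4i/5` to `±i/3`, where `v_B = arccos (4/5)` while the angle at
`0 ∈ ∂H²` is already `arccos (7/25)`.
-/

open ComplexConjugate

namespace Complex

lemma abs_angle_mul_mul_sub_angle_le {u v p q : ℂ} (hv : v ≠ 0) (hq : q ≠ 0) :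
    |InnerProductGeometry.angle (u * q) (v * p) - InnerProductGeometry.angle u v| ≤
      InnerProductGeometry.angle p q := by
  have h₁ := InnerProductGeometry.angle_le_angle_add_angle (u * q) (v * q) (v * p)
  have h₂ := InnerProductGeometry.angle_le_angle_add_angle (u * q) (v * p) (v * q)
  rw [angle_mul_right hq, angle_mul_left hv] at h₁ h₂
  rw [abs_sub_le_iff]
  constructor <;> linarith [InnerProductGeometry.angle_comm p q]

lemma angle_eq_arccos_re_div_norm (u v : ℂ) :
    InnerProductGeometry.angle u v = arccos ((conj u * v).re / ‖conj u * v‖) := by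
  rw [InnerProductGeometry.angle, Complex.inner, norm_mul, norm_conj, mul_comm v]

lemma angle_le_arccos_of_sq {u v : ℂ} {c : ℝ} (hu : u ≠ 0) (hv : v ≠ 0) (hc : 0 ≤ c)
    (hre : 0 ≤ u.re * v.re + u.im * v.im)
    (h : c ^ 2 * ((u.re * v.re + u.im * v.im) ^ 2 + (u.re * v.im - u.im * v.re) ^ 2) ≤
      (u.re * v.re + u.im * v.im) ^ 2) :
    InnerProductGeometry.angle u v ≤ arccos c := by
  have hP : 0 < ‖conj u * v‖ := by simp [hu, hv]
  rw [angle_eq_arccos_re_div_norm]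
  refine arccos_le_arccos ((le_div_iff₀ hP).2 ?_)
  rw [norm_def, ← Real.sqrt_sq hc, ← Real.sqrt_mul (sq_nonneg c), mul_re, conj_re, conj_im,
    neg_mul, sub_neg_eq_add, ← Real.sqrt_sq hre]
  refine Real.sqrt_le_sqrt (le_of_eq_of_le ?_ h)
  simp only [normSq_apply, mul_re, mul_im, conj_re, conj_im]
  ring

lemma arccos_le_angle_of_sq {u v : ℂ} {c : ℝ} (hc : 0 ≤ c)
    (h : (u.re * v.re + u.im * v.im) ^ 2 ≤
      c ^ 2 * ((u.re * v.re + u.im * v.im) ^ 2 + (u.re * v.im - u.im * v.re) ^ 2)) :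
    arccos c ≤ InnerProductGeometry.angle u v := by
  rw [angle_eq_arccos_re_div_norm]
  refine arccos_le_arccos (div_le_of_le_mul₀ (norm_nonneg _) hc ?_)
  rw [norm_def, ← Real.sqrt_sq hc, ← Real.sqrt_mul (sq_nonneg c), mul_re, conj_re, conj_im,
    neg_mul, sub_neg_eq_add]
  refine (le_abs_self _).trans (Real.abs_le_sqrt (h.trans_eq ?_))
  simp only [normSq_apply, mul_re, mul_im, conj_re, conj_im]
  ring

end Complex

lemma mem_frontier_upperHalfC {z : ℂ} : z ∈ frontier upperHalfC ↔ z.im = 0 := by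
  change z ∈ frontier (Complex.im ⁻¹' Ioi 0) ↔ z ∈ Complex.im ⁻¹' {0}
  rw [← Complex.isOpenMap_im.preimage_frontier_eq_frontier_preimage Complex.continuous_im,
    frontier_Ioi]

lemma mem_frontier_ball_iff {w : ℂ} : w ∈ frontier (Metric.ball (0 : ℂ) 1) ↔ ‖w‖ = 1 := by
  simp [frontier_ball (0 : ℂ) one_ne_zero]

lemma angle_le_visualAngleC {G : Set ℂ} {x y z : ℂ} (hz : z ∈ frontier G) :
    ∠ x z y ≤ visualAngleC G x y :=
  le_csSup ⟨π, by rintro _ ⟨w, -, rfl⟩; exact angle_le_pi _ _ _⟩ ⟨z, hz, rfl⟩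

lemma visualAngleC_le {G : Set ℂ} {x y : ℂ} {c : ℝ} (hG : (frontier G).Nonempty)
    (h : ∀ z ∈ frontier G, ∠ x z y ≤ c) : visualAngleC G x y ≤ c :=
  csSup_le (hG.image _) (by rintro _ ⟨z, hz, rfl⟩; exact h z hz)

lemma visualAngleC_nonneg {G : Set ℂ} (hG : (frontier G).Nonempty) (x y : ℂ) :
    0 ≤ visualAngleC G x y :=
  (angle_nonneg _ _ _).trans (angle_le_visualAngleC hG.some_mem)

lemma exists_sbtw_im_eq_zero {p q : ℂ} (hp : p.im < 0) (hq : 0 < q.im) :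
    ∃ w : ℂ, w.im = 0 ∧ Sbtw ℝ p w q := by
  have hpq : p ≠ q := fun h => by rw [h] at hp; linarith
  have hden : 0 < q.im - p.im := by linarith
  set t := -p.im / (q.im - p.im)
  refine ⟨AffineMap.lineMap p q t, ?_, sbtw_lineMap_iff.2 ⟨hpq, ?_, ?_⟩⟩
  · simp only [AffineMap.lineMap_apply_module, Complex.add_im, Complex.real_smul,
      Complex.mul_im, Complex.ofReal_re, Complex.ofReal_im, t]
    field_simp
    ring
  · exact div_pos (by linarith) hden
  · exact (div_lt_one hden).2 (by linarith)

lemma angle_conj_le_visualAngleC {a x : ℂ} (ha : 0 < a.im) (hx : 0 < x.im) (y : ℂ) :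
    ∠ x (conj a) y ≤ visualAngleC upperHalfC x y := by
  obtain ⟨w, hw, hbtw⟩ := exists_sbtw_im_eq_zero (by simpa using ha : (conj a).im < 0) hx
  have hext : ∠ y w x = ∠ w y (conj a) + ∠ y (conj a) w :=
    exterior_angle_eq_angle_add_angle x hbtw.symm
  calc ∠ x (conj a) y = ∠ y (conj a) w := by rw [angle_comm, hbtw.angle_eq_right]
    _ ≤ ∠ y w x := by linarith [angle_nonneg w y (conj a)]
    _ = ∠ x w y := angle_comm _ _ _
    _ ≤ visualAngleC upperHalfC x y := angle_le_visualAngleC (mem_frontier_upperHalfC.2 hw)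

section halfToDisc

open Complex

variable {a : ℂ} {α : ℝ}

lemma ne_conj_of_im_nonneg (ha : 0 < a.im) {z : ℂ} (hz : 0 ≤ z.im) : z ≠ conj a := by
  rintro rfl
  rw [conj_im] at hz
  linarith

lemma angle_halfToDisc (ha : a ≠ conj a) {x y z : ℂ} (hx : x ≠ conj a) (hy : y ≠ conj a)
    (hz : z ≠ conj a) :
    ∠ (halfToDisc a α x) (halfToDisc a α z) (halfToDisc a α y) =
      InnerProductGeometry.angle ((x - z) * (y - conj a)) ((y - z) * (x - conj a)) := by
  rw [← sub_ne_zero] at ha hx hy hz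
  set K := exp (α * I) * (a - conj a) / ((x - conj a) * (y - conj a) * (z - conj a))
  have hK : K ≠ 0 := by simp [K, ha, hx, hy, hz]
  have hfx : halfToDisc a α x - halfToDisc a α z = K * ((x - z) * (y - conj a)) := by
    simp only [halfToDisc, K]
    field_simp
    ring
  have hfy : halfToDisc a α y - halfToDisc a α z = K * ((y - z) * (x - conj a)) := by
    simp only [halfToDisc, K]
    field_simp
    ring
  rw [EuclideanGeometry.angle, vsub_eq_sub, vsub_eq_sub, hfx, hfy, angle_mul_left hK]

lemma angle_halfToDisc_exp (ha : a ≠ conj a) {x y : ℂ} (hx : x ≠ conj a) (hy : y ≠ conj a) :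
    ∠ (halfToDisc a α x) (exp (α * I)) (halfToDisc a α y) = ∠ x (conj a) y := by
  rw [← sub_ne_zero] at hx hy
  have ha' : conj a - a ≠ 0 := sub_ne_zero.2 ha.symm
  set K := exp (α * I) * (conj a - a) / ((x - conj a) * (y - conj a))
  have hK : K ≠ 0 := by simp [K, ha', hx, hy]
  have hfx : halfToDisc a α x - exp (α * I) = K * (y - conj a) := by
    simp only [halfToDisc, K]
    field_simp
    ring
  have hfy : halfToDisc a α y - exp (α * I) = K * (x - conj a) := by
    simp only [halfToDisc, K]
    field_simp
    ring
  rw [EuclideanGeometry.angle, vsub_eq_sub, vsub_eq_sub, hfx, hfy, angle_mul_left hK,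
    angle_comm x, EuclideanGeometry.angle, vsub_eq_sub, vsub_eq_sub]

lemma norm_halfToDisc_eq_one_iff (ha : 0 < a.im) {z : ℂ} (hz : z ≠ conj a) :
    ‖halfToDisc a α z‖ = 1 ↔ z.im = 0 := by
  rw [← sub_ne_zero] at hz
  rw [halfToDisc, norm_div, norm_mul, norm_exp_ofReal_mul_I, one_mul,
    div_eq_one_iff_eq (norm_ne_zero_iff.2 hz), norm_def, norm_def,
    Real.sqrt_inj (normSq_nonneg _) (normSq_nonneg _)]
  simp only [normSq_apply, sub_re, sub_im, conj_re, conj_im]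
  constructor
  · intro h
    nlinarith
  · intro h
    rw [h]
    ring

lemma exists_im_eq_zero_halfToDisc_eq (ha : 0 < a.im) {w : ℂ} (hw : ‖w‖ = 1)
    (hwe : w ≠ exp (α * I)) : ∃ z : ℂ, z.im = 0 ∧ halfToDisc a α z = w := by
  have hew : exp (α * I) - w ≠ 0 := sub_ne_zero.2 hwe.symm
  have ha' : a - conj a ≠ 0 := sub_ne_zero.2 (ne_conj_of_im_nonneg ha ha.le)
  set z := (exp (α * I) * a - w * conj a) / (exp (α * I) - w)
  have hz : z - conj a = exp (α * I) * (a - conj a) / (exp (α * I) - w) := by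
    simp only [z]
    field_simp
    ring
  have hz' : z ≠ conj a := by
    rw [← sub_ne_zero, hz]
    simp [ha', hew]
  have hfz : halfToDisc a α z = w := by
    rw [halfToDisc, hz, div_eq_iff (by simp [ha', hew])]
    simp only [z]
    field_simp
    ring
  exact ⟨z, (norm_halfToDisc_eq_one_iff ha hz').1 (hfz ▸ hw), hfz⟩

lemma abs_angle_halfToDisc_sub_angle_le (ha : 0 < a.im) {x y z : ℂ} (hx : 0 < x.im)
    (hy : 0 < y.im) (hz : z.im = 0) :
    |∠ (halfToDisc a α x) (halfToDisc a α z) (halfToDisc a α y) - ∠ x z y| ≤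
      ∠ x (conj a) y := by
  have hyz : y - z ≠ 0 := sub_ne_zero.2 fun h => by rw [h] at hy; linarith
  rw [angle_halfToDisc (ne_conj_of_im_nonneg ha ha.le) (ne_conj_of_im_nonneg ha hx.le)
    (ne_conj_of_im_nonneg ha hy.le) (ne_conj_of_im_nonneg ha hz.ge)]
  exact Complex.abs_angle_mul_mul_sub_angle_le hyz (sub_ne_zero.2 (ne_conj_of_im_nonneg ha hy.le))

theorem visualAngleC_halfToDisc_bounds (ha : 0 < a.im) {x y : ℂ} (hx : 0 < x.im)
    (hy : 0 < y.im) :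
    visualAngleC upperHalfC x y / 2 ≤
        visualAngleC (Metric.ball 0 1) (halfToDisc a α x) (halfToDisc a α y) ∧
      visualAngleC (Metric.ball 0 1) (halfToDisc a α x) (halfToDisc a α y) ≤
        2 * visualAngleC upperHalfC x y := by
  set m := visualAngleC upperHalfC x y
  set vB := visualAngleC (Metric.ball 0 1) (halfToDisc a α x) (halfToDisc a α y)
  have hx' := ne_conj_of_im_nonneg ha hx.le
  have hy' := ne_conj_of_im_nonneg ha hy.le
  have hH : (frontier upperHalfC).Nonempty := ⟨0, mem_frontier_upperHalfC.2 rfl⟩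
  have he : exp (α * I) ∈ frontier (Metric.ball (0 : ℂ) 1) :=
    mem_frontier_ball_iff.2 (norm_exp_ofReal_mul_I α)
  have hvB_conj : ∠ x (conj a) y ≤ vB := by
    rw [← angle_halfToDisc_exp (ne_conj_of_im_nonneg ha ha.le) hx' hy']
    exact angle_le_visualAngleC he
  have hm_conj : ∠ x (conj a) y ≤ m := angle_conj_le_visualAngleC ha hx y
  have hm : m ≤ vB + ∠ x (conj a) y := by
    refine visualAngleC_le hH fun z hz => ?_
    rw [mem_frontier_upperHalfC] at hz
    have hfz : halfToDisc a α z ∈ frontier (Metric.ball (0 : ℂ) 1) :=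
      mem_frontier_ball_iff.2 ((norm_halfToDisc_eq_one_iff ha (ne_conj_of_im_nonneg ha hz.ge)).2 hz)
    linarith [abs_le.1 (abs_angle_halfToDisc_sub_angle_le (α := α) ha hx hy hz),
      angle_le_visualAngleC (x := halfToDisc a α x) (y := halfToDisc a α y) hfz]
  have hvB : vB ≤ m + ∠ x (conj a) y := by
    refine visualAngleC_le ⟨_, he⟩ fun w hw => ?_
    by_cases hwe : w = exp (α * I)
    · rw [hwe, angle_halfToDisc_exp (ne_conj_of_im_nonneg ha ha.le) hx' hy']
      linarith [visualAngleC_nonneg hH x y]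
    · obtain ⟨z, hz, rfl⟩ := exists_im_eq_zero_halfToDisc_eq ha (mem_frontier_ball_iff.1 hw) hwe
      linarith [abs_le.1 (abs_angle_halfToDisc_sub_angle_le (α := α) ha hx hy hz),
        angle_le_visualAngleC (x := x) (y := y) (mem_frontier_upperHalfC.2 hz)]
  constructor <;> linarith

end halfToDisc

section Sharpness

open Complex

lemma cayley_eq_halfToDisc : cayley = halfToDisc I 0 := by
  ext z
  simp [cayley, halfToDisc, sub_neg_eq_add]

lemma two_mul_arccos_four_fifths : 2 * arccos (4 / 5) = arccos (7 / 25) := by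
  have h₀ : 0 ≤ 2 * arccos (4 / 5) := by linarith [arccos_nonneg (4 / 5)]
  have h₁ : 2 * arccos (4 / 5) ≤ π := by
    linarith [arccos_le_pi_div_two.2 (by norm_num : (0 : ℝ) ≤ 4 / 5)]
  rw [← arccos_cos h₀ h₁, Real.cos_two_mul, cos_arccos (by norm_num) (by norm_num)]
  norm_num

lemma visualAngleC_upperHalfC_scaled {c : ℝ} (hc : 0 < c) :
    visualAngleC upperHalfC ⟨c, 2 * c⟩ ⟨c, c / 2⟩ = arccos (4 / 5) := by
  refine le_antisymm (visualAngleC_le ⟨0, mem_frontier_upperHalfC.2 rfl⟩ fun z hz => ?_) ?_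
  · rw [mem_frontier_upperHalfC] at hz
    have hu : (⟨c, 2 * c⟩ - z : ℂ) ≠ 0 :=
      sub_ne_zero.2 (ne_of_apply_ne im (by rw [hz]; exact (mul_pos two_pos hc).ne'))
    have hv : (⟨c, c / 2⟩ - z : ℂ) ≠ 0 :=
      sub_ne_zero.2 (ne_of_apply_ne im (by rw [hz]; exact (half_pos hc).ne'))
    apply Complex.angle_le_arccos_of_sq hu hv (by norm_num) <;>
      simp only [sub_re, sub_im, hz, sub_zero]
    · nlinarith [sq_nonneg (c - z.re)]
    · nlinarith [sq_nonneg (c - z.re), sq_nonneg ((c - z.re) ^ 2 - c ^ 2)]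
  · refine le_trans ?_ (angle_le_visualAngleC (z := ⟨2 * c, 0⟩) (mem_frontier_upperHalfC.2 rfl))
    apply Complex.arccos_le_angle_of_sq (by norm_num)
    simp only [vsub_eq_sub, sub_re, sub_im, sub_zero]
    nlinarith

noncomputable def cayleyScaledAngle (s : ℝ) : ℝ :=
  InnerProductGeometry.angle ((-1 + 2 * I) * (2 + (1 + 2 * s) * I)) ((-2 + I) * (1 + (2 + s) * I))

lemma angle_cayley_scaled {c : ℝ} (hc : 0 < c) :
    ∠ (cayley ⟨c, 2 * c⟩) (cayley ⟨2 * c, 0⟩) (cayley ⟨c, c / 2⟩) = cayleyScaledAngle c⁻¹ := by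
  have hI : ∀ {z : ℂ}, 0 ≤ z.im → z ≠ conj I := ne_conj_of_im_nonneg zero_lt_one
  rw [cayley_eq_halfToDisc, angle_halfToDisc (hI zero_le_one) (hI (mul_pos two_pos hc).le)
    (hI (half_pos hc).le) (hI le_rfl), cayleyScaledAngle]
  conv_rhs => rw [← angle_mul_left (a := (c : ℂ) ^ 2 / 2) (by simp [hc.ne'])]
  have hc' : (c : ℂ) ≠ 0 := ofReal_ne_zero.2 hc.ne'
  rw [show (⟨c, 2 * c⟩ : ℂ) = c * (1 + 2 * I) by apply Complex.ext <;> simp [mul_comm],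
    show (⟨c, c / 2⟩ : ℂ) = c * (2 + I) / 2 by apply Complex.ext <;> simp,
    show (⟨2 * c, 0⟩ : ℂ) = 2 * c by apply Complex.ext <;> simp, conj_I]
  congr 1 <;> push_cast <;> field_simp <;> ring

lemma continuousAt_cayleyScaledAngle : ContinuousAt cayleyScaledAngle 0 :=
  (InnerProductGeometry.continuousAt_angle (by simp [Complex.ext_iff])
    (by simp [Complex.ext_iff])).comp (f := fun s : ℝ => (_, _)) (by fun_prop)

lemma arccos_le_cayleyScaledAngle_zero : arccos (7 / 25) ≤ cayleyScaledAngle 0 := by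
  apply Complex.arccos_le_angle_of_sq (by norm_num)
  norm_num

theorem exists_visualAngleC_cayley_gt {ε : ℝ} (hε : 0 < ε) :
    ∃ x ∈ upperHalfC, ∃ y ∈ upperHalfC,
      (2 - ε) * visualAngleC upperHalfC x y <
        visualAngleC (Metric.ball 0 1) (cayley x) (cayley y) := by
  have hθ : 0 < arccos (4 / 5) := arccos_pos.2 (by norm_num)
  have h₀ : (2 - ε) * arccos (4 / 5) < cayleyScaledAngle 0 := by
    linarith [two_mul_arccos_four_fifths, arccos_le_cayleyScaledAngle_zero, mul_pos hε hθ]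
  obtain ⟨s, hs, hs₀ : 0 < s⟩ :=
    (((continuousAt_cayleyScaledAngle.eventually (lt_mem_nhds h₀)).filter_mono
      nhdsWithin_le_nhds).and (self_mem_nhdsWithin (s := Ioi 0))).exists
  have hc : 0 < s⁻¹ := inv_pos.2 hs₀
  have hz : cayley ⟨2 * s⁻¹, 0⟩ ∈ frontier (Metric.ball (0 : ℂ) 1) := by
    rw [mem_frontier_ball_iff, cayley_eq_halfToDisc,
      norm_halfToDisc_eq_one_iff zero_lt_one (ne_conj_of_im_nonneg zero_lt_one le_rfl)]
  refine ⟨⟨s⁻¹, 2 * s⁻¹⟩, mul_pos two_pos hc, ⟨s⁻¹, s⁻¹ / 2⟩, half_pos hc, ?_⟩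
  rw [visualAngleC_upperHalfC_scaled hc]
  calc (2 - ε) * arccos (4 / 5) < cayleyScaledAngle s := hs
    _ = _ := by rw [angle_cayley_scaled hc, inv_inv]
    _ ≤ _ := angle_le_visualAngleC hz

lemma visualAngleC_ball_pm_third_le :
    visualAngleC (Metric.ball 0 1) ⟨0, 1 / 3⟩ ⟨0, -1 / 3⟩ ≤ arccos (4 / 5) := by
  refine visualAngleC_le ⟨1, by simp [mem_frontier_ball_iff]⟩ fun w hw => ?_
  rw [mem_frontier_ball_iff, norm_def, Real.sqrt_eq_one, normSq_apply] at hw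
  have hu : (⟨0, 1 / 3⟩ - w : ℂ) ≠ 0 := fun h => by
    rw [sub_eq_zero] at h; rw [← h] at hw; norm_num at hw
  have hv : (⟨0, -1 / 3⟩ - w : ℂ) ≠ 0 := fun h => by
    rw [sub_eq_zero] at h; rw [← h] at hw; norm_num at hw
  apply Complex.angle_le_arccos_of_sq hu hv (by norm_num) <;> simp only [sub_re, sub_im]
  · nlinarith
  · nlinarith [sq_nonneg w.re]

lemma arccos_seven_twentyfifths_le_angle :
    arccos (7 / 25) ≤ ∠ (⟨-3 / 5, 4 / 5⟩ : ℂ) 0 ⟨3 / 5, 4 / 5⟩ := by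
  apply Complex.arccos_le_angle_of_sq (by norm_num)
  norm_num

lemma cayley_neg_three_fifths : cayley ⟨-3 / 5, 4 / 5⟩ = ⟨0, 1 / 3⟩ := by
  rw [cayley, div_eq_iff (by simp [Complex.ext_iff])]
  apply Complex.ext <;> norm_num

lemma cayley_three_fifths : cayley ⟨3 / 5, 4 / 5⟩ = ⟨0, -1 / 3⟩ := by
  rw [cayley, div_eq_iff (by simp [Complex.ext_iff])]
  apply Complex.ext <;> norm_num

theorem exists_visualAngleC_cayley_eq_half :
    ∃ x ∈ upperHalfC, ∃ y ∈ upperHalfC, x ≠ y ∧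
      visualAngleC (Metric.ball 0 1) (cayley x) (cayley y) =
        visualAngleC upperHalfC x y / 2 := by
  refine ⟨⟨-3 / 5, 4 / 5⟩, by norm_num [upperHalfC], ⟨3 / 5, 4 / 5⟩, by norm_num [upperHalfC],
    by norm_num [Complex.ext_iff], le_antisymm ?_ ?_⟩
  · rw [cayley_neg_three_fifths, cayley_three_fifths]
    have hH := arccos_seven_twentyfifths_le_angle.trans
      (angle_le_visualAngleC (G := upperHalfC) (mem_frontier_upperHalfC.2 rfl))
    linarith [visualAngleC_ball_pm_third_le, two_mul_arccos_four_fifths]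
  · rw [cayley_eq_halfToDisc]
    exact (visualAngleC_halfToDisc_bounds (by simp) (by norm_num) (by norm_num)).1

end Sharpness

theorem stmt3 :
    (∀ a : ℂ, 0 < a.im → ∀ α : ℝ, ∀ x ∈ upperHalfC, ∀ y ∈ upperHalfC,
      visualAngleC upperHalfC x y / 2 ≤
          visualAngleC (Metric.ball 0 1) (halfToDisc a α x) (halfToDisc a α y) ∧
        visualAngleC (Metric.ball 0 1) (halfToDisc a α x) (halfToDisc a α y) ≤
          2 * visualAngleC upperHalfC x y) ∧
    (∀ ε : ℝ, 0 < ε →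
      ∃ x ∈ upperHalfC, ∃ y ∈ upperHalfC,
        (2 - ε) * visualAngleC upperHalfC x y <
          visualAngleC (Metric.ball 0 1) (cayley x) (cayley y)) ∧
    (∃ x ∈ upperHalfC, ∃ y ∈ upperHalfC, x ≠ y ∧
      visualAngleC (Metric.ball 0 1) (cayley x) (cayley y) =
        visualAngleC upperHalfC x y / 2) :=
  ⟨fun _ ha _ _ hx _ hy => visualAngleC_halfToDisc_bounds ha hx hy,
    fun _ hε => exists_visualAngleC_cayley_gt hε, exists_visualAngleC_cayley_eq_half⟩
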